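/- If two probability distributions F and G on ℝ with finite first moments have equal integrated quantile functions, i.e. F^{(-2)}(t) = G^{(-2)}(t) for almost every t ∈ (0,1), then F = G. -/

import Mathlib

/-!
The quantile function `Q_F` is the generalised inverse of the CDF, `Q_F p ≤ x ↔ p ≤ F(x)` for
`0 < p < 1`, so it pushes Lebesgue measure on `(0,1)` forward to `F`. Hence `Q_F` is integrable
on `(0,1)` when `F` has a first moment, and `F^{(-2)}` is its primitive, continuous on `[0,1]`.
Continuous functions that agree a.e. on `(0,1)` agree everywhere there, and the Lebesgue
differentiation theorem then gives `Q_F = Q_G` a.e. on `(0,1)`; pushing Lebesgue measure forward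
along both yields `F = G`.
-/

open MeasureTheory Filter Set ProbabilityTheory

noncomputable def quantileFn (μ : Measure ℝ) (p : ℝ) : ℝ :=
  sInf {η : ℝ | p ≤ (μ (Set.Iic η)).toReal}

noncomputable def intQuantile (μ : Measure ℝ) (p : ℝ) : ℝ :=
  ∫ t in (0:ℝ)..p, quantileFn μ t

open scoped Topology

theorem ae_eq_of_primitive_ae_eq {E : Type*} [NormedAddCommGroup E]
    [NormedSpace ℝ E] [CompleteSpace E] {f g : ℝ → E} {a b : ℝ}
    (hf : IntervalIntegrable f volume a b) (hg : IntervalIntegrable g volume a b)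
    (h : ∀ᵐ x ∂volume.restrict (Ioo a b), ∫ t in a..x, f t = ∫ t in a..x, g t) :
    f =ᵐ[volume.restrict (Ioo a b)] g := by
  have ha : a ∈ uIcc a b := left_mem_uIcc
  have hsub : Ioo a b ⊆ uIcc a b := Ioo_subset_Icc_self.trans Icc_subset_uIcc
  have heq : EqOn (fun x => ∫ t in a..x, f t) (fun x => ∫ t in a..x, g t) (Ioo a b) :=
    Measure.eqOn_open_of_ae_eq h isOpen_Ioo
      ((intervalIntegral.continuousOn_primitive_interval' hf ha).mono hsub)
      ((intervalIntegral.continuousOn_primitive_interval' hg ha).mono hsub)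
  rw [EventuallyEq, ae_restrict_iff' measurableSet_Ioo]
  filter_upwards [hf.ae_hasDerivAt_integral, hg.ae_hasDerivAt_integral] with x hfx hgx hx
  have hnear : (fun x => ∫ t in a..x, g t) =ᶠ[𝓝 x] fun x => ∫ t in a..x, f t :=
    eventuallyEq_of_mem (isOpen_Ioo.mem_nhds hx) heq.symm
  exact ((hfx (hsub hx) a ha).congr_of_eventuallyEq hnear).unique (hgx (hsub hx) a ha)

section quantile

variable (μ : Measure ℝ)

lemma bddBelow_setOf_le_cdf {p : ℝ} (hp : 0 < p) : BddBelow {η | p ≤ cdf μ η} := by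
  obtain ⟨y, hy⟩ := ((tendsto_cdf_atBot μ).eventually (eventually_lt_nhds hp)).exists
  exact ⟨y, fun η hη => le_of_not_gt fun hlt =>
    (hη.trans (monotone_cdf μ hlt.le)).not_gt hy⟩

variable [IsProbabilityMeasure μ]

lemma quantileFn_eq_sInf_cdf (p : ℝ) : quantileFn μ p = sInf {η | p ≤ cdf μ η} := by
  simp [quantileFn, cdf_eq_real, measureReal_def]

lemma le_cdf_quantileFn {p : ℝ} (hp : p ∈ Ioo 0 1) : p ≤ cdf μ (quantileFn μ p) := by
  rw [quantileFn_eq_sInf_cdf]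
  set S := {η | p ≤ cdf μ η}
  have hne : S.Nonempty :=
    ((tendsto_cdf_atTop μ).eventually (eventually_gt_nhds hp.2)).exists.imp fun _ h => h.le
  have hbdd : BddBelow S := bddBelow_setOf_le_cdf μ hp.1
  have hright : Ioi (sInf S) ⊆ S := fun η hη => by
    obtain ⟨s, hs, hsη⟩ := (csInf_lt_iff hbdd hne).mp hη
    exact hs.trans (monotone_cdf μ hsη.le)
  exact ge_of_tendsto (((cdf μ).right_continuous _).tendsto.mono_left
    (nhdsWithin_mono _ Ioi_subset_Ici_self)) (eventually_nhdsWithin_of_forall hright)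

lemma quantileFn_le_iff {p : ℝ} (hp : p ∈ Ioo 0 1) (x : ℝ) :
    quantileFn μ p ≤ x ↔ p ≤ cdf μ x := by
  refine ⟨fun hx => (le_cdf_quantileFn μ hp).trans (monotone_cdf μ hx), fun hx => ?_⟩
  rw [quantileFn_eq_sInf_cdf]
  exact csInf_le (bddBelow_setOf_le_cdf μ hp.1) hx

lemma quantileFn_monotoneOn : MonotoneOn (quantileFn μ) (Ioo 0 1) := fun _ hp _ hq hpq =>
  (quantileFn_le_iff μ hp _).2 (hpq.trans (le_cdf_quantileFn μ hq))

lemma aemeasurable_quantileFn : AEMeasurable (quantileFn μ) (volume.restrict (Ioo 0 1)) :=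
  aemeasurable_restrict_of_monotoneOn measurableSet_Ioo (quantileFn_monotoneOn μ)

lemma map_quantileFn : (volume.restrict (Ioo 0 1)).map (quantileFn μ) = μ := by
  refine Measure.ext_of_Iic _ _ fun x => ?_
  have hlevel : Ioo 0 1 ∩ quantileFn μ ⁻¹' Iic x = Ioo 0 1 ∩ Iic (cdf μ x) := by
    ext p
    simp only [mem_inter_iff, mem_preimage, mem_Iic, and_congr_right_iff]
    exact fun hp => quantileFn_le_iff μ hp x
  rw [Measure.map_apply_of_aemeasurable (aemeasurable_quantileFn μ) measurableSet_Iic,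
    Measure.restrict_apply' measurableSet_Ioo, inter_comm, hlevel,
    measure_congr ((Ioo_ae_eq_Ioc (μ := volume)).inter (ae_eq_refl (Iic (cdf μ x)))),
    Ioc_inter_Iic, min_eq_right (cdf_le_one μ x), Real.volume_Ioc, sub_zero, ofReal_cdf]

lemma intervalIntegrable_quantileFn (hmom : Integrable id μ) :
    IntervalIntegrable (quantileFn μ) volume 0 1 := by
  have hint : IntegrableOn (quantileFn μ) (Ioo 0 1) := by
    rw [← map_quantileFn μ] at hmom
    exact (integrable_map_measure hmom.aestronglyMeasurable (aemeasurable_quantileFn μ)).mp hmom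
  exact (intervalIntegrable_iff_integrableOn_Ioc_of_le zero_le_one).2
    ((integrableOn_Ioc_iff_integrableOn_Ioo).2 hint)

end quantile

/-- if two probability distributions on `ℝ` with finite first moments have
equal integrated quantile functions a.e. on `(0,1)`, then they are equal. -/
theorem eq_of_intQuantile_ae_eq
    (F G : Measure ℝ) [IsProbabilityMeasure F] [IsProbabilityMeasure G]
    (hFmom : Integrable id F) (hGmom : Integrable id G)
    (h : ∀ᵐ t ∂(volume.restrict (Set.Ioo (0:ℝ) 1)), intQuantile F t = intQuantile G t) :
    F = G := by
  have hQ : quantileFn F =ᵐ[volume.restrict (Ioo 0 1)] quantileFn G :=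
    ae_eq_of_primitive_ae_eq (intervalIntegrable_quantileFn F hFmom)
      (intervalIntegrable_quantileFn G hGmom) h
  rw [← map_quantileFn F, ← map_quantileFn G, Measure.map_congr hQ]
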